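/- The pointwise-union operation on SPs is sound: for reduced-and-ordered symbolic packets p₁ and p₂, the SP p₁ +̂ p₂ computed by the recursive parallel-traversal algorithm (with truth-table base cases, a common-field inductive case merging branch maps via b'(v) = b₁(v;d₁) +̂ b₂(v;d₂) over v ∈ dom(b₁)∪dom(b₂), the expansion rule for mismatched head fields, and the smart constructor) satisfies ⟦p₁ +̂ p₂⟧ = ⟦p₁⟧ ∪ ⟦p₂⟧. -/

import Mathlib

/-!
Statement 9: soundness of the pointwise-union operation on SPs: for
reduced-and-ordered SPs `p₁`, `p₂`, the SP `p₁ +̂ p₂` computed by the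
recursive parallel-traversal algorithm (truth-table base cases, common-field
merging of branch maps, expansion rule for mismatched head fields, smart
constructor) denotes `⟦p₁⟧ ∪ ⟦p₂⟧`.
-/


inductive SP (F V : Type) : Type where
  | bot : SP F V
  | top : SP F V
  | node : F → List (V × SP F V) → SP F V → SP F V

namespace SP

variable {F V : Type} [DecidableEq V]

/-- Branch lookup with default. -/
def getD (b : List (V × SP F V)) (v : V) (d : SP F V) : SP F V :=
  match b with
  | [] => d
  | q :: rest => if q.1 = v then q.2 else getD rest v d

theorem sizeOf_getD_lt (b : List (V × SP F V)) (v : V) (d : SP F V) :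
    sizeOf (getD b v d) < 1 + sizeOf b + sizeOf d := by
  induction b with
  | nil => simp [getD]
  | cons q rest ih =>
    simp only [getD]
    split
    · have : sizeOf q.2 < sizeOf q := by
        obtain ⟨a, c⟩ := q; simp
      simp only [List.cons.sizeOf_spec]; omega
    · simp only [List.cons.sizeOf_spec]; omega

/-- Membership of a packet in the set denoted by an SP. -/
def mem (π : F → V) (p : SP F V) : Prop :=
  match p with
  | .bot => False
  | .top => True
  | .node f b d => mem π (getD b (π f) d)
termination_by sizeOf p
decreasing_by
  have := sizeOf_getD_lt b (π f) d
  simp only [SP.node.sizeOf_spec]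
  omega

/-- Denotation of an SP as a set of packets. -/
def sem (p : SP F V) : Set (F → V) := {π | mem π p}

open Classical in
/-- Smart constructor: drop branches syntactically equal to the default,
collapse to the default if nothing remains. -/
noncomputable def spsc (f : F) (b : List (V × SP F V)) (d : SP F V) : SP F V :=
  let b' := b.filter (fun q => decide (q.2 ≠ d))
  if b' = [] then d else .node f b' d

end SP

namespace SP

variable {F V : Type} [LinearOrder F] [LinearOrder V]

/-- `ROf f p`: the SP `p` is reduced and ordered for the field `f`:
all fields tested in `p` are strictly greater than `f` (and recursively ordered),
the branch keys are strictly ordered, the branch map of a node is nonempty,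
and no branch child is syntactically equal to the default child. -/
inductive ROf : F → SP F V → Prop where
  | bot (f : F) : ROf f .bot
  | top (f : F) : ROf f .top
  | node (f f' : F) (b : List (V × SP F V)) (d : SP F V) :
      f < f' →
      b ≠ [] →
      (∀ q ∈ b, ROf f' q.2) →
      ROf f' d →
      (∀ q ∈ b, q.2 ≠ d) →
      List.Pairwise (· < ·) (b.map Prod.fst) →
      ROf f (.node f' b d)

/-- `p` is reduced and ordered. -/
def RO (p : SP F V) : Prop := ∃ f, ROf f p

end SP

namespace SP

theorem sizeOf_snd_lt_of_mem {F V : Type} {b : List (V × SP F V)} {q : V × SP F V}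
    (h : q ∈ b) : sizeOf q.2 < sizeOf b := by
  have h1 := List.sizeOf_lt_of_mem h
  obtain ⟨a, c⟩ := q
  simp at h1 ⊢
  omega

variable {F V : Type} [LinearOrder F] [LinearOrder V]

def ofBool (b : Bool) : SP F V := if b then .top else .bot

/-- Generic binary operation on SPs, parameterized by the truth table `g`
for the base cases, implemented by parallel traversal of the two SPs:
when the head fields agree the branch maps are merged pointwise over the
union of their keys (with the defaults filling missing entries), mismatched
head fields are handled by the expansion rule, and results are rebuilt with
the smart constructor. -/
noncomputable def binop (g : Bool → Bool → Bool) : SP F V → SP F V → SP F V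
  | .bot, .bot => ofBool (g false false)
  | .bot, .top => ofBool (g false true)
  | .top, .bot => ofBool (g true false)
  | .top, .top => ofBool (g true true)
  | .node f₁ b₁ d₁, .node f₂ b₂ d₂ =>
      if f₁ = f₂ then
        spsc f₁ (((b₁.map Prod.fst) ++ (b₂.map Prod.fst)).dedup.map
            (fun v => (v, binop g (getD b₁ v d₁) (getD b₂ v d₂))))
          (binop g d₁ d₂)
      else if f₁ < f₂ then
        spsc f₁ (b₁.attach.map (fun q => (q.1.1, binop g q.1.2 (.node f₂ b₂ d₂))))
          (binop g d₁ (.node f₂ b₂ d₂))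
      else
        spsc f₂ (b₂.attach.map (fun q => (q.1.1, binop g (.node f₁ b₁ d₁) q.1.2)))
          (binop g (.node f₁ b₁ d₁) d₂)
  | .node f₁ b₁ d₁, p =>
      spsc f₁ (b₁.attach.map (fun q => (q.1.1, binop g q.1.2 p))) (binop g d₁ p)
  | p, .node f₂ b₂ d₂ =>
      spsc f₂ (b₂.attach.map (fun q => (q.1.1, binop g p q.1.2))) (binop g p d₂)
termination_by p q => sizeOf p + sizeOf q
decreasing_by
  all_goals simp_wf
  all_goals
    first
      | (have h1 := sizeOf_getD_lt b₁ v d₁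
         have h2 := sizeOf_getD_lt b₂ v d₂
         omega)
      | (have h1 := sizeOf_snd_lt_of_mem q.2
         simp only [SP.node.sizeOf_spec]
         omega)
      | (have h1 := sizeOf_snd_lt_of_mem q.2
         omega)
      | (simp only [SP.node.sizeOf_spec]; omega)
      | omega

end SP

namespace SP

variable {F V : Type} [LinearOrder F] [LinearOrder V]

theorem mem_bot (π : F → V) : mem π (.bot : SP F V) ↔ False := by rw [mem]
theorem mem_top (π : F → V) : mem π (.top : SP F V) ↔ True := by rw [mem]
theorem mem_node (π : F → V) (f : F) (b : List (V × SP F V)) (d : SP F V) :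
    mem π (SP.node f b d) ↔ mem π (getD b (π f) d) := by rw [mem]

theorem getD_eq_of_not_mem {b : List (V × SP F V)} {v : V} (d : SP F V)
    (h : v ∉ b.map Prod.fst) : getD b v d = d := by
  induction b with
  | nil => rfl
  | cons q rest ih =>
    simp only [List.map_cons, List.mem_cons] at h
    push_neg at h
    simp only [getD]
    rw [if_neg (fun hh => h.1 hh.symm), ih h.2]

theorem getD_eq_of_all_default {b : List (V × SP F V)} {v : V} {d : SP F V}
    (h : ∀ q ∈ b, q.2 = d) : getD b v d = d := by
  induction b with
  | nil => rfl
  | cons q rest ih =>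
    simp only [getD]
    split
    · exact h q (by simp)
    · exact ih (fun q hq => h q (by simp [hq]))

theorem getD_map_fn (keys : List V) (val : V → SP F V) (v : V) (d : SP F V) :
    getD (keys.map fun u => (u, val u)) v d = if v ∈ keys then val v else d := by
  induction keys with
  | nil => simp [getD]
  | cons k rest ih =>
    simp only [List.map_cons, getD]
    by_cases hk : k = v
    · subst hk; simp
    · rw [if_neg hk, ih]
      simp [show ¬ v = k from fun h => hk h.symm]

theorem getD_map_pair (b : List (V × SP F V)) (h : SP F V → SP F V) (v : V) (d : SP F V) :
    getD (b.map fun x => (x.1, h x.2)) v (h d) = h (getD b v d) := by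
  induction b with
  | nil => rfl
  | cons q rest ih =>
    simp only [List.map_cons, getD]
    split <;> simp_all

theorem getD_filter (b : List (V × SP F V)) (p : V × SP F V → Bool) (v : V) (d : SP F V)
    (hnd : (b.map Prod.fst).Nodup) (hp : ∀ q ∈ b, p q = false → q.2 = d) :
    getD (b.filter p) v d = getD b v d := by
  induction b with
  | nil => rfl
  | cons q rest ih =>
    simp only [List.map_cons, List.nodup_cons] at hnd
    have ih' := ih hnd.2 (fun q hq hpq => hp q (by simp [hq]) hpq)
    by_cases hpq : p q
    · rw [List.filter_cons_of_pos hpq]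
      simp only [getD]
      split <;> [rfl; exact ih']
    · rw [List.filter_cons_of_neg (by simp [hpq])]
      rw [ih']
      simp only [getD]
      split
      · rename_i heq
        rw [hp q (by simp) (by simp [hpq])]
        subst heq
        exact getD_eq_of_not_mem d hnd.1
      · rfl

theorem mem_spsc (π : F → V) (f : F) (b : List (V × SP F V)) (d : SP F V)
    (hnd : (b.map Prod.fst).Nodup) :
    mem π (spsc f b d) ↔ mem π (getD b (π f) d) := by
  classical
  simp only [spsc]
  split
  · rename_i hemp
    have hall : ∀ q ∈ b, q.2 = d := by
      intro q hq
      have := List.filter_eq_nil_iff.mp hemp q hq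
      simpa using this
    rw [getD_eq_of_all_default hall]
  · rw [mem_node, getD_filter b _ (π f) d hnd]
    intro q _ hpq
    simpa using hpq

theorem Inv_getD {b : List (V × SP F V)} {d : SP F V} (P : SP F V → Prop)
    (hb : ∀ q ∈ b, P q.2) (hd : P d) (v : V) : P (getD b v d) := by
  induction b with
  | nil => exact hd
  | cons q rest ih =>
    simp only [getD]
    split
    · exact hb q (by simp)
    · exact ih (fun q hq => hb q (by simp [hq]))

/-- Structural invariant: all branch key lists are nodup, recursively. -/
inductive Inv : SP F V → Prop where
  | bot : Inv .bot
  | top : Inv .top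
  | node (f : F) (b : List (V × SP F V)) (d : SP F V) :
      (b.map Prod.fst).Nodup → (∀ q ∈ b, Inv q.2) → Inv d → Inv (.node f b d)

theorem ROf.inv {f : F} {p : SP F V} (h : ROf f p) : Inv p := by
  induction h with
  | bot => exact Inv.bot
  | top => exact Inv.top
  | node f f' b d hlt hne hb hd hnd hsort ihb ihd =>
    exact Inv.node f' b d hsort.nodup ihb ihd

theorem mem_expand (π : F → V) (f : F) (b : List (V × SP F V)) (d : SP F V)
    (h : SP F V → SP F V) (hnd : (b.map Prod.fst).Nodup) :
    mem π (spsc f (b.attach.map (fun q => (q.1.1, h q.1.2))) (h d))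
      ↔ mem π (h (getD b (π f) d)) := by
  rw [List.attach_map_val (l := b) (f := fun x => (x.1, h x.2))]
  rw [mem_spsc π f _ _ (by simpa [Function.comp_def] using hnd)]
  rw [getD_map_pair]

theorem mem_binop_or (π : F → V) : ∀ (n : ℕ) (p q : SP F V), sizeOf p + sizeOf q ≤ n →
    Inv p → Inv q → (mem π (binop Bool.or p q) ↔ mem π p ∨ mem π q) := by
  intro n
  induction n with
  | zero =>
    intro p q h _ _
    exfalso
    cases p <;> cases q <;> simp at h
  | succ n ih =>
    intro p q hs hp hq
    cases p with
    | bot =>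
      cases q with
      | bot => rw [binop]; simp [ofBool, mem_bot]
      | top => rw [binop]; simp [ofBool, mem_bot, mem_top]
      | node f₂ b₂ d₂ =>
        rw [binop]
        · cases hq with
          | node _ _ _ hnd hb hd =>
            rw [mem_expand π f₂ b₂ d₂ (fun x => binop Bool.or SP.bot x) hnd]
            rw [mem_node, mem_bot]
            have hle : sizeOf (SP.bot : SP F V) + sizeOf (getD b₂ (π f₂) d₂) ≤ n := by
              have := sizeOf_getD_lt b₂ (π f₂) d₂
              simp only [SP.node.sizeOf_spec, SP.bot.sizeOf_spec] at hs ⊢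
              omega
            have hmain := ih _ _ hle Inv.bot (Inv_getD Inv hb hd (π f₂))
            rw [mem_bot] at hmain
            simpa using hmain
        · intro f₁ b₁ d₁ h; cases h
    | top =>
      cases q with
      | bot => rw [binop]; simp [ofBool, mem_bot, mem_top]
      | top => rw [binop]; simp [ofBool, mem_top]
      | node f₂ b₂ d₂ =>
        rw [binop]
        · cases hq with
          | node _ _ _ hnd hb hd =>
            rw [mem_expand π f₂ b₂ d₂ (fun x => binop Bool.or SP.top x) hnd]
            rw [mem_node, mem_top]
            have hle : sizeOf (SP.top : SP F V) + sizeOf (getD b₂ (π f₂) d₂) ≤ n := by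
              have := sizeOf_getD_lt b₂ (π f₂) d₂
              simp only [SP.node.sizeOf_spec, SP.top.sizeOf_spec] at hs ⊢
              omega
            have hmain := ih _ _ hle Inv.top (Inv_getD Inv hb hd (π f₂))
            rw [mem_top] at hmain
            simpa using hmain
        · intro f₁ b₁ d₁ h; cases h
    | node f₁ b₁ d₁ =>
      cases hp with
      | node _ _ _ hnd₁ hb₁ hd₁ =>
      cases q with
      | bot =>
        rw [binop]
        · rw [mem_expand π f₁ b₁ d₁ (fun x => binop Bool.or x SP.bot) hnd₁]
          rw [mem_node, mem_bot]
          have hle : sizeOf (getD b₁ (π f₁) d₁) + sizeOf (SP.bot : SP F V) ≤ n := by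
            have := sizeOf_getD_lt b₁ (π f₁) d₁
            simp only [SP.node.sizeOf_spec, SP.bot.sizeOf_spec] at hs ⊢
            omega
          have hmain := ih _ _ hle (Inv_getD Inv hb₁ hd₁ (π f₁)) Inv.bot
          rw [mem_bot] at hmain
          simpa using hmain
        · intro _ _ _ h; cases h
      | top =>
        rw [binop]
        · rw [mem_expand π f₁ b₁ d₁ (fun x => binop Bool.or x SP.top) hnd₁]
          rw [mem_node, mem_top]
          have hle : sizeOf (getD b₁ (π f₁) d₁) + sizeOf (SP.top : SP F V) ≤ n := by
            have := sizeOf_getD_lt b₁ (π f₁) d₁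
            simp only [SP.node.sizeOf_spec, SP.top.sizeOf_spec] at hs ⊢
            omega
          have hmain := ih _ _ hle (Inv_getD Inv hb₁ hd₁ (π f₁)) Inv.top
          rw [mem_top] at hmain
          simpa using hmain
        · intro _ _ _ h; cases h
      | node f₂ b₂ d₂ =>
        cases hq with
        | node _ _ _ hnd₂ hb₂ hd₂ =>
        rw [binop]
        have hszd : sizeOf d₁ + sizeOf d₂ ≤ n := by
          simp only [SP.node.sizeOf_spec] at hs
          have hb1 : 0 < sizeOf b₁ := by cases b₁ <;> simp
          omega
        split_ifs with heq hlt
        · subst heq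
          rw [mem_spsc π f₁ _ _ (by
            rw [List.map_map]
            have hid : (Prod.fst ∘ fun v => (v, binop Bool.or (getD b₁ v d₁) (getD b₂ v d₂))) = id := rfl
            rw [hid, List.map_id]
            exact List.nodup_dedup _)]
          rw [getD_map_fn]
          rw [mem_node, mem_node]
          by_cases hv : π f₁ ∈ (b₁.map Prod.fst ++ b₂.map Prod.fst).dedup
          · rw [if_pos hv]
            have hle : sizeOf (getD b₁ (π f₁) d₁) + sizeOf (getD b₂ (π f₁) d₂) ≤ n := by
              have h1 := sizeOf_getD_lt b₁ (π f₁) d₁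
              have h2 := sizeOf_getD_lt b₂ (π f₁) d₂
              simp only [SP.node.sizeOf_spec] at hs
              omega
            exact ih _ _ hle (Inv_getD Inv hb₁ hd₁ (π f₁)) (Inv_getD Inv hb₂ hd₂ (π f₁))
          · rw [if_neg hv]
            rw [List.mem_dedup, List.mem_append] at hv
            push_neg at hv
            rw [getD_eq_of_not_mem d₁ hv.1, getD_eq_of_not_mem d₂ hv.2]
            exact ih _ _ hszd hd₁ hd₂
        · rw [mem_expand π f₁ b₁ d₁ (fun x => binop Bool.or x (SP.node f₂ b₂ d₂)) hnd₁]
          rw [mem_node π f₁ b₁ d₁]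
          have hle : sizeOf (getD b₁ (π f₁) d₁) + sizeOf (SP.node f₂ b₂ d₂) ≤ n := by
            have := sizeOf_getD_lt b₁ (π f₁) d₁
            simp only [SP.node.sizeOf_spec] at hs ⊢
            omega
          exact ih _ _ hle (Inv_getD Inv hb₁ hd₁ (π f₁)) (Inv.node f₂ b₂ d₂ hnd₂ hb₂ hd₂)
        · rw [mem_expand π f₂ b₂ d₂ (fun x => binop Bool.or (SP.node f₁ b₁ d₁) x) hnd₂]
          rw [mem_node π f₂ b₂ d₂]
          have hle : sizeOf (SP.node f₁ b₁ d₁) + sizeOf (getD b₂ (π f₂) d₂) ≤ n := by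
            have := sizeOf_getD_lt b₂ (π f₂) d₂
            simp only [SP.node.sizeOf_spec] at hs ⊢
            omega
          exact ih _ _ hle (Inv.node f₁ b₁ d₁ hnd₁ hb₁ hd₁) (Inv_getD Inv hb₂ hd₂ (π f₂))

end SP

theorem sp_union_sound {F V : Type} [LinearOrder F] [LinearOrder V]
    (p₁ p₂ : SP F V) (h₁ : SP.RO p₁) (h₂ : SP.RO p₂) :
    SP.sem (SP.binop Bool.or p₁ p₂) = SP.sem p₁ ∪ SP.sem p₂ := by
  obtain ⟨f₁, h₁⟩ := h₁
  obtain ⟨f₂, h₂⟩ := h₂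
  ext π
  exact SP.mem_binop_or π _ p₁ p₂ le_rfl h₁.inv h₂.inv
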